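/- For integers 1 ≤ m ≤ k and n ≥ l ≥ k+1, the number op_{n,≥k,≤l}^m of ordered preference sets (a_1,…,a_n) of length n with at least k flaws, leading term a_1 = m, and a_i ≤ l for all i, equals C(n+l−m−1, l−k−2). -/

import Mathlib

/-- The first unoccupied parking space `j` with `p ≤ j ≤ n`, if any. -/
def firstFree (n : ℕ) (occ : Finset ℕ) (p : ℕ) : Option ℕ :=
  (List.range' p (n + 1 - p)).find? (fun j => decide (j ∉ occ))

/-- Number of cars that fail to park, processing the preference list in order,
given the set of already occupied spaces. -/
def flawsFrom (n : ℕ) : List ℕ → Finset ℕ → ℕ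
  | [], _ => 0
  | p :: rest, occ =>
    match firstFree n occ p with
    | none => flawsFrom n rest occ + 1
    | some j => flawsFrom n rest (insert j occ)

/-- The number of flaws (unparked cars) of a preference list of length `n`. -/
def flaws (n : ℕ) (a : List ℕ) : ℕ := flawsFrom n a ∅

/-- A preference set of length `n`: a list of length `n` with entries in `{1, …, n}`. -/
def IsPrefSet (n : ℕ) (a : List ℕ) : Prop :=
  a.length = n ∧ ∀ x ∈ a, 1 ≤ x ∧ x ≤ n

/-- An ordered preference set of length `n`: a nondecreasing preference set. -/
def IsOrderedPrefSet (n : ℕ) (a : List ℕ) : Prop :=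
  IsPrefSet n a ∧ a.Pairwise (· ≤ ·)

/-- `op_{n,≥k}`: number of ordered preference sets of length `n` with at least `k` flaws. -/
noncomputable def opGe (n k : ℕ) : ℕ :=
  {a : List ℕ | IsOrderedPrefSet n a ∧ k ≤ flaws n a}.ncard

/-- `op_{n,≤k}`: number of ordered preference sets of length `n` with at most `k` flaws. -/
noncomputable def opLe (n k : ℕ) : ℕ :=
  {a : List ℕ | IsOrderedPrefSet n a ∧ flaws n a ≤ k}.ncard

/-- `op_{n,k}`: number of ordered preference sets of length `n` with exactly `k` flaws. -/
noncomputable def opEq (n k : ℕ) : ℕ :=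
  {a : List ℕ | IsOrderedPrefSet n a ∧ flaws n a = k}.ncard

/-- `op_{n,≥k,≤l}`: at least `k` flaws, every entry at most `l`. -/
noncomputable def opGeLe (n k l : ℕ) : ℕ :=
  {a : List ℕ | IsOrderedPrefSet n a ∧ k ≤ flaws n a ∧ ∀ x ∈ a, x ≤ l}.ncard

/-- `op_{n,≥k,≤l}^m`: at least `k` flaws, every entry at most `l`, leading term `m`. -/
noncomputable def opGeLeLead (n k l m : ℕ) : ℕ :=
  {a : List ℕ | IsOrderedPrefSet n a ∧ k ≤ flaws n a ∧ (∀ x ∈ a, x ≤ l) ∧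
    a.head? = some m}.ncard

/-- `op_{n,k,≤l}^m`: exactly `k` flaws, every entry at most `l`, leading term `m`. -/
noncomputable def opEqLeLead (n k l m : ℕ) : ℕ :=
  {a : List ℕ | IsOrderedPrefSet n a ∧ flaws n a = k ∧ (∀ x ∈ a, x ≤ l) ∧
    a.head? = some m}.ncard

/-- `op_{n,k}^m`: exactly `k` flaws, leading term `m`. -/
noncomputable def opLead (n k m : ℕ) : ℕ :=
  {a : List ℕ | IsOrderedPrefSet n a ∧ flaws n a = k ∧ a.head? = some m}.ncard

/-- `op_{n,k,=l}^m`: exactly `k` flaws, maximal entry exactly `l`, leading term `m`. -/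
noncomputable def opMaxLead (n k l m : ℕ) : ℕ :=
  {a : List ℕ | IsOrderedPrefSet n a ∧ flaws n a = k ∧ (∀ x ∈ a, x ≤ l) ∧ l ∈ a ∧
    a.head? = some m}.ncard

/-- Binomial coefficient `C(a, b)` with an integer lower index, which is `0`
when `b < 0` (the standard convention). -/
def chooseInt (a : ℕ) (b : ℤ) : ℕ := if 0 ≤ b then a.choose b.toNat else 0

/-!
For a nondecreasing preference list the cars park greedily: car `i` (indexed from `0`) takes
space `max aᵢ (s + 1)`, where `s` is the space of the previous car. Hence after the first failure
every later car fails, and there are at least `k ≥ 1` flaws exactly when `aᵢ ≥ i + k + 1` for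
some `i`. Removing the leading term `m ≤ k` leaves a nondecreasing list of length `n - 1` with
entries in `[m, l]` and some entry `tⱼ ≥ j + k + 2`. Such lists are counted by Pascal's rule,
splitting on whether the first entry equals `m`.
-/

lemma firstFree_eq_none {n p : ℕ} {occ : Finset ℕ} (h : ∀ j, p ≤ j → j ≤ n → j ∈ occ) :
    firstFree n occ p = none := by
  refine List.find?_eq_none.mpr fun j hj => ?_
  rw [List.mem_range'_1] at hj
  simpa using h j hj.1 (by omega)

lemma firstFree_eq_some {n p v : ℕ} {occ : Finset ℕ} (hpv : p ≤ v) (hvn : v ≤ n) (hv : v ∉ occ)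
    (hbelow : ∀ j, p ≤ j → j < v → j ∈ occ) : firstFree n occ p = some v := by
  refine List.find?_eq_some_iff_append.mpr
    ⟨by simpa using hv, List.range' p (v - p), List.range' (v + 1) (n - v), ?_, fun j hj => ?_⟩
  · rw [show n + 1 - p = (v - p) + (n - v + 1) by omega, ← List.range'_append_1,
      show p + (v - p) = v by omega, List.range'_succ]
  · rw [List.mem_range'_1] at hj
    simpa using hbelow j hj.1 (by omega)

lemma flawsFrom_eq_length {n : ℕ} {occ : Finset ℕ} :
    ∀ {a : List ℕ}, (∀ p ∈ a, firstFree n occ p = none) → flawsFrom n a occ = a.length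
  | [], _ => rfl
  | p :: rest, h => by
    simp only [flawsFrom, h p List.mem_cons_self, List.length_cons,
      flawsFrom_eq_length fun q hq => h q (List.mem_cons_of_mem _ hq)]

/-- The parking process on a nondecreasing list when the cars parked so far fill every space from
the current preference up to `s`: the next car parks at `max p (s + 1)`, and after the first
failure every later car fails too. -/
def sortedFlaws (n : ℕ) : List ℕ → ℕ → ℕ
  | [], _ => 0
  | p :: rest, s =>
    if max p (s + 1) ≤ n then sortedFlaws n rest (max p (s + 1)) else rest.length + 1

lemma flawsFrom_eq_sortedFlaws {n : ℕ} : ∀ {a : List ℕ} {q s : ℕ} {occ : Finset ℕ},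
    a.Pairwise (· ≤ ·) → (∀ x ∈ a, q ≤ x ∧ x ≤ n) → (∀ j, q ≤ j → j ≤ s → j ∈ occ) →
    (∀ j ∈ occ, j ≤ s) → flawsFrom n a occ = sortedFlaws n a s
  | [], _, _, _, _, _, _, _ => rfl
  | p :: rest, q, s, occ, hsort, hbounds, hfull, hocc => by
    obtain ⟨hp_le, hrest⟩ := List.pairwise_cons.mp hsort
    obtain ⟨hqp, hpn⟩ := hbounds p List.mem_cons_self
    by_cases hparks : max p (s + 1) ≤ n
    · have hfree : firstFree n occ p = some (max p (s + 1)) := by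
        refine firstFree_eq_some (le_max_left _ _) hparks (fun hmem => ?_) fun j hpj hjv => ?_
        · have := hocc _ hmem
          omega
        · exact hfull j (hqp.trans hpj) (by omega)
      rw [flawsFrom, hfree, sortedFlaws, if_pos hparks]
      refine flawsFrom_eq_sortedFlaws hrest
        (fun x hx => ⟨hp_le x hx, (hbounds x (List.mem_cons_of_mem _ hx)).2⟩)
        (fun j hpj hjv => ?_) fun j hj => ?_
      · rcases hjv.eq_or_lt with rfl | hjv
        · exact Finset.mem_insert_self _ _
        · exact Finset.mem_insert_of_mem (hfull j (hqp.trans hpj) (by omega))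
      · rcases Finset.mem_insert.mp hj with rfl | hj
        · exact le_rfl
        · have := hocc j hj
          omega
    · -- every space from `q` to `n` is taken, so this car and all later ones fail
      have hnone : ∀ x, q ≤ x → firstFree n occ x = none := fun x hqx =>
        firstFree_eq_none fun j hxj hjn => hfull j (hqx.trans hxj) (by omega)
      rw [flawsFrom, hnone p hqp, sortedFlaws, if_neg hparks,
        flawsFrom_eq_length fun x hx => hnone x (hqp.trans (hp_le x hx))]

lemma flaws_eq_sortedFlaws {n : ℕ} {a : List ℕ} (ha : IsOrderedPrefSet n a) :
    flaws n a = sortedFlaws n a 0 :=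
  flawsFrom_eq_sortedFlaws ha.2 ha.1.2 (fun _ _ _ => by omega) (by simp)

/-- Car `i + d` cannot park: its space would be at least `aᵢ + d` and at least `s + i + d + 1`. -/
lemma sub_le_sortedFlaws {n : ℕ} : ∀ {a : List ℕ} {s i d : ℕ}, i + d < a.length →
    (n < a.getD i 0 + d ∨ n < s + i + d + 1) → a.length - (i + d) ≤ sortedFlaws n a s
  | [], _, _, _, hlt, _ => by simp at hlt
  | p :: rest, s, i, d, hlt, hblocked => by
    simp only [List.length_cons] at hlt ⊢
    rw [sortedFlaws]
    split_ifs with hparks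
    · rcases i with _ | i
      · rw [List.getD_cons_zero] at hblocked
        rcases d with _ | d
        · omega
        · have := sub_le_sortedFlaws (n := n) (a := rest) (s := max p (s + 1)) (i := 0) (d := d)
            (by omega) (Or.inr (by omega))
          omega
      · rw [List.getD_cons_succ] at hblocked
        have := sub_le_sortedFlaws (n := n) (a := rest) (s := max p (s + 1)) (i := i) (d := d)
          (by omega) (by omega)
        omega
    · omega

/-- Car `i` would park at a space at most `i + 1 + t`, so only the last `a.length + t - n` cars
can fail. -/
lemma sortedFlaws_le {n : ℕ} : ∀ {a : List ℕ} {s t : ℕ},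
    (∀ i < a.length, a.getD i 0 ≤ i + 1 + t) → s ≤ t → sortedFlaws n a s ≤ a.length + t - n
  | [], _, _, _, _ => by simp [sortedFlaws]
  | p :: rest, s, t, hle, hst => by
    have hp : p ≤ 1 + t := by simpa using hle 0 (by simp)
    simp only [List.length_cons]
    rw [sortedFlaws]
    split_ifs with hparks
    · have := sortedFlaws_le (n := n) (a := rest) (s := max p (s + 1)) (t := t + 1)
        (fun i hi => by
          have := hle (i + 1) (by simpa using hi)
          rw [List.getD_cons_succ] at this
          omega)
        (by omega)
      omega
    · omega

def ExceedsDiagonal (c : ℕ) (t : List ℕ) : Prop :=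
  ∃ j < t.length, j + c ≤ t.getD j 0

lemma le_flaws_iff {n k : ℕ} {a : List ℕ} (hk : 1 ≤ k) (ha : IsOrderedPrefSet n a) :
    k ≤ flaws n a ↔ ExceedsDiagonal (k + 1) a := by
  rw [flaws_eq_sortedFlaws ha]
  obtain ⟨⟨hlen, hbounds⟩, -⟩ := ha
  constructor
  · intro hflaws
    by_contra hbelow
    have := sortedFlaws_le (n := n) (a := a) (s := 0) (t := k - 1)
      (fun i hi => by
        have : ¬i + (k + 1) ≤ a.getD i 0 := fun h => hbelow ⟨i, hi, h⟩
        omega) (Nat.zero_le _)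
    omega
  · rintro ⟨i, hi, hai⟩
    have hain : a.getD i 0 ≤ n := by
      rw [List.getD_eq_getElem _ _ hi]
      exact (hbounds _ (List.getElem_mem hi)).2
    have := sub_le_sortedFlaws (n := n) (a := a) (s := 0) (i := i) (d := n - k - i) (by omega)
      (Or.inl (by omega))
    omega

lemma chooseInt_natCast (a b : ℕ) : chooseInt a b = a.choose b := by
  simp [chooseInt]

lemma chooseInt_of_neg (a : ℕ) {b : ℤ} (hb : b < 0) : chooseInt a b = 0 :=
  if_neg (by omega)

lemma chooseInt_succ (a : ℕ) (b : ℤ) :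
    chooseInt (a + 1) b = chooseInt a (b - 1) + chooseInt a b := by
  rcases lt_trichotomy b 0 with hb | rfl | hb
  · rw [chooseInt_of_neg _ hb, chooseInt_of_neg _ hb, chooseInt_of_neg _ (by omega)]
  · simp [chooseInt]
  · obtain ⟨b, rfl⟩ : ∃ b' : ℕ, b = b' + 1 := ⟨b.toNat - 1, by omega⟩
    rw [add_sub_cancel_right, ← Nat.cast_succ, chooseInt_natCast, chooseInt_natCast,
      chooseInt_natCast, Nat.choose_succ_succ]

def sortedLists (N m l : ℕ) : Set (List ℕ) :=
  {t | t.Pairwise (· ≤ ·) ∧ t.length = N ∧ ∀ x ∈ t, m ≤ x ∧ x ≤ l}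

lemma sortedLists_finite (N m l : ℕ) : (sortedLists N m l).Finite := by
  refine ((List.finite_length_eq (Fin (l + 1)) N).image (List.map Fin.val)).subset ?_
  rintro t ⟨-, hlen, hbounds⟩
  refine ⟨t.pmap (fun x hx => ⟨x, Nat.lt_succ_of_le hx⟩) fun x hx => (hbounds x hx).2,
    by simpa using hlen, ?_⟩
  simp [List.map_pmap]

lemma sortedLists_zero (m l : ℕ) : sortedLists 0 m l = {[]} := by
  ext t
  constructor
  · rintro ⟨-, hlen, -⟩
    exact List.length_eq_zero_iff.mp hlen
  · rintro rfl
    simp [sortedLists]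

lemma sortedLists_self (N m : ℕ) : sortedLists N m m = {List.replicate N m} := by
  ext t
  simp only [sortedLists, Set.mem_ofPred_eq, Set.mem_singleton_iff, le_antisymm_iff.symm]
  constructor
  · rintro ⟨-, hlen, hall⟩
    exact List.eq_replicate_iff.mpr ⟨hlen, fun x hx => (hall x hx).symm⟩
  · rintro rfl
    exact ⟨List.pairwise_replicate.mpr (Or.inr le_rfl), List.length_replicate,
      fun x hx => (List.eq_of_mem_replicate hx).symm⟩

lemma cons_mem_sortedLists_iff {N q m l : ℕ} {t : List ℕ} (hqm : q ≤ m) (hml : m ≤ l) :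
    m :: t ∈ sortedLists (N + 1) q l ↔ t ∈ sortedLists N m l := by
  simp only [sortedLists, Set.mem_ofPred_eq, List.pairwise_cons, List.length_cons,
    List.forall_mem_cons]
  constructor
  · rintro ⟨⟨hm, hsort⟩, hlen, -, hbounds⟩
    exact ⟨hsort, by omega, fun x hx => ⟨hm x hx, (hbounds x hx).2⟩⟩
  · rintro ⟨hsort, hlen, hbounds⟩
    exact ⟨⟨fun x hx => (hbounds x hx).1, hsort⟩, by omega, ⟨hqm, hml⟩,
      fun x hx => ⟨hqm.trans (hbounds x hx).1, (hbounds x hx).2⟩⟩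

lemma sortedLists_succ (N : ℕ) {m l : ℕ} (hml : m < l) :
    sortedLists (N + 1) m l =
      List.cons m '' sortedLists N m l ∪ sortedLists (N + 1) (m + 1) l := by
  ext t
  constructor
  · intro ht
    have ⟨_, hlen, hbounds⟩ := ht
    rcases t with _ | ⟨x, r⟩
    · simp at hlen
    rcases (hbounds x List.mem_cons_self).1.eq_or_lt with rfl | hx
    · exact Or.inl ⟨r, (cons_mem_sortedLists_iff le_rfl hml.le).mp ht, rfl⟩
    · refine Or.inr ⟨ht.1, hlen, fun y hy => ⟨?_, (hbounds y hy).2⟩⟩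
      rcases List.mem_cons.mp hy with rfl | hy
      · exact hx
      · exact hx.trans_le (List.rel_of_pairwise_cons ht.1 hy)
  · rintro (⟨r, hr, rfl⟩ | ⟨hsort, hlen, hbounds⟩)
    · exact (cons_mem_sortedLists_iff le_rfl hml.le).mpr hr
    · exact ⟨hsort, hlen, fun x hx => ⟨Nat.le_of_succ_le (hbounds x hx).1, (hbounds x hx).2⟩⟩

lemma ncard_image_cons_union {S T : Set (List ℕ)} {N m l : ℕ} (hS : S.Finite)
    (hT : T ⊆ sortedLists N (m + 1) l) : (List.cons m '' S ∪ T).ncard = S.ncard + T.ncard := by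
  have hdisj : Disjoint (List.cons m '' S) T := by
    refine Set.disjoint_left.mpr ?_
    rintro _ ⟨r, -, rfl⟩ hr
    exact absurd ((hT hr).2.2 m List.mem_cons_self).1 (by omega)
  rw [Set.ncard_union_eq hdisj (hS.image _) ((sortedLists_finite N (m + 1) l).subset hT),
    Set.ncard_image_of_injective _ List.cons_injective]

theorem ncard_sortedLists (N m l : ℕ) (hml : m ≤ l) :
    (sortedLists N m l).ncard = (N + (l - m)).choose N := by
  match N with
  | 0 => simp [sortedLists_zero]
  | N + 1 =>
    rcases hml.eq_or_lt with rfl | hml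
    · simp [sortedLists_self]
    · rw [sortedLists_succ N hml, ncard_image_cons_union (sortedLists_finite N m l) subset_rfl,
        ncard_sortedLists N m l hml.le,
        ncard_sortedLists (N + 1) (m + 1) l hml,
        show N + 1 + (l - m) = N + (l - m) + 1 by omega,
        show N + 1 + (l - (m + 1)) = N + (l - m) by omega, Nat.choose_succ_succ]
termination_by N + (l - m)

lemma exceedsDiagonal_cons {c m : ℕ} {t : List ℕ} (hmc : m < c) :
    ExceedsDiagonal c (m :: t) ↔ ExceedsDiagonal (c + 1) t := by
  constructor
  · rintro ⟨_ | j, hj, hjt⟩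
    · simp only [List.getD_cons_zero] at hjt
      omega
    · rw [List.getD_cons_succ] at hjt
      exact ⟨j, by simpa using hj, by omega⟩
  · rintro ⟨j, hj, hjt⟩
    exact ⟨j + 1, by simpa using hj, by rw [List.getD_cons_succ]; omega⟩

lemma exceedsDiagonal_of_mem_sortedLists {N m l c : ℕ} {t : List ℕ} (hcm : c ≤ m)
    (ht : t ∈ sortedLists (N + 1) m l) : ExceedsDiagonal c t := by
  obtain ⟨-, hlen, hbounds⟩ := ht
  rcases t with _ | ⟨x, r⟩
  · simp at hlen
  · exact ⟨0, by simp, by simpa using hcm.trans (hbounds x List.mem_cons_self).1⟩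

lemma not_exceedsDiagonal_of_mem_sortedLists {N m l c : ℕ} {t : List ℕ} (hlc : l < c)
    (ht : t ∈ sortedLists N m l) : ¬ExceedsDiagonal c t := by
  rintro ⟨j, hj, hjt⟩
  rw [List.getD_eq_getElem _ _ hj] at hjt
  have := (ht.2.2 _ (List.getElem_mem hj)).2
  omega

theorem ncard_sortedLists_inter_exceedsDiagonal (N m l c : ℕ) (hmc : m ≤ c) (hlc : l < N + c) :
    (sortedLists N m l ∩ {t | ExceedsDiagonal c t}).ncard =
      chooseInt (N + (l - m)) ((l : ℤ) - c) := by
  by_cases hcl : l < c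
  · have hempty : sortedLists N m l ∩ {t | ExceedsDiagonal c t} = ∅ :=
      Set.eq_empty_iff_forall_notMem.mpr fun t ht =>
        not_exceedsDiagonal_of_mem_sortedLists hcl ht.1 ht.2
    rw [chooseInt_of_neg _ (by omega), hempty, Set.ncard_empty]
  obtain ⟨N, rfl⟩ : ∃ N', N = N' + 1 := ⟨N - 1, by omega⟩
  rcases hmc.eq_or_lt with rfl | hmc
  · have hall : sortedLists (N + 1) m l ⊆ {t | ExceedsDiagonal m t} :=
      fun t ht => exceedsDiagonal_of_mem_sortedLists le_rfl ht
    rw [Set.inter_eq_left.mpr hall,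
      ncard_sortedLists _ _ _ (by omega), show (l : ℤ) - m = ((l - m : ℕ) : ℤ) by omega,
      chooseInt_natCast, Nat.choose_symm_add]
  · have hml : m < l := by omega
    have hcons : List.cons m ⁻¹' {t | ExceedsDiagonal c t} = {t | ExceedsDiagonal (c + 1) t} :=
      Set.ext fun t => exceedsDiagonal_cons hmc
    rw [sortedLists_succ N hml, Set.union_inter_distrib_right, ← Set.image_inter_preimage, hcons,
      ncard_image_cons_union ((sortedLists_finite N m l).inter_of_left _) Set.inter_subset_left,
      ncard_sortedLists_inter_exceedsDiagonal N m l (c + 1) (by omega) (by omega),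
      ncard_sortedLists_inter_exceedsDiagonal (N + 1) (m + 1) l c hmc (by omega),
      show N + 1 + (l - m) = N + (l - m) + 1 by omega,
      show N + 1 + (l - (m + 1)) = N + (l - m) by omega, chooseInt_succ]
    push_cast
    ring_nf
termination_by N + (l - m)

lemma isOrderedPrefSet_and_forall_le_iff {n l : ℕ} {a : List ℕ} (hln : l ≤ n) :
    (IsOrderedPrefSet n a ∧ ∀ x ∈ a, x ≤ l) ↔ a ∈ sortedLists n 1 l := by
  constructor
  · rintro ⟨⟨⟨hlen, hbounds⟩, hsort⟩, hle⟩
    exact ⟨hsort, hlen, fun x hx => ⟨(hbounds x hx).1, hle x hx⟩⟩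
  · rintro ⟨hsort, hlen, hbounds⟩
    exact ⟨⟨⟨hlen, fun x hx => ⟨(hbounds x hx).1, (hbounds x hx).2.trans hln⟩⟩, hsort⟩,
      fun x hx => (hbounds x hx).2⟩

lemma setOf_orderedPrefSet_head_eq_image_cons {N k l m : ℕ} (hm : 1 ≤ m) (hmk : m ≤ k)
    (hml : m ≤ l) (hln : l ≤ N + 1) :
    {a : List ℕ | IsOrderedPrefSet (N + 1) a ∧ k ≤ flaws (N + 1) a ∧ (∀ x ∈ a, x ≤ l) ∧
      a.head? = some m} =
      List.cons m '' (sortedLists N m l ∩ {t | ExceedsDiagonal (k + 2) t}) := by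
  ext a
  constructor
  · rintro ⟨ha, hk, hl, hhead⟩
    obtain ⟨t, rfl⟩ := List.head?_eq_some_iff.mp hhead
    refine ⟨t, ⟨(cons_mem_sortedLists_iff hm hml).mp
      ((isOrderedPrefSet_and_forall_le_iff hln).mp ⟨ha, hl⟩), ?_⟩, rfl⟩
    exact (exceedsDiagonal_cons (by omega)).mp ((le_flaws_iff (by omega) ha).mp hk)
  · rintro ⟨t, ⟨ht, hex⟩, rfl⟩
    obtain ⟨ha, hl⟩ := (isOrderedPrefSet_and_forall_le_iff hln).mpr
      ((cons_mem_sortedLists_iff hm hml).mpr ht)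
    exact ⟨ha, (le_flaws_iff (by omega) ha).mpr ((exceedsDiagonal_cons (by omega)).mpr hex), hl,
      rfl⟩

theorem stmt7 (n k l m : ℕ) (hm : 1 ≤ m) (hmk : m ≤ k) (hl : k + 1 ≤ l) (hn : l ≤ n) :
    opGeLeLead n k l m = chooseInt (n + l - m - 1) ((l : ℤ) - k - 2) := by
  obtain ⟨N, rfl⟩ : ∃ N, n = N + 1 := ⟨n - 1, by omega⟩
  rw [opGeLeLead, setOf_orderedPrefSet_head_eq_image_cons hm hmk (by omega) hn,
    Set.ncard_image_of_injective _ List.cons_injective,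
    ncard_sortedLists_inter_exceedsDiagonal N m l (k + 2) (by omega) (by omega),
    show N + 1 + l - m - 1 = N + (l - m) by omega]
  push_cast
  ring_nf
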